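/- Let $\mathfrak{g}$ be a finite-dimensional real Lie algebra with $\mathrm{ad}$-invariant inner product, $\mathfrak{t}$ an abelian subalgebra, and $F : \mathfrak{g} \to \mathfrak{g}$ self-adjoint with image in $\mathfrak{t}$ and vanishing on $\mathfrak{t}^\perp$. Then for every $y \in \mathfrak{g}$ and every $s \in \mathbb{R}$, the linear map $e^{s\,\mathrm{ad}_{Fy}} - s\,\mathrm{ad}_y \circ F$ is a linear automorphism of $\mathfrak{g}$. -/

import Mathlib

open scoped RealInnerProductSpace

/-!
Since `ad_{Fy}` is skew and kills the abelian `𝔱`, its range lies in `𝔱ᗮ`, so `F ∘ ad_{Fy} = 0`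
and hence `F ∘ e^{s ad_{Fy}} = F`. If `e^{s ad_{Fy}} V = s [y, F V]`, applying `F` gives
`W = s F [y, W]` for `W = F V ∈ 𝔱`, and then `‖W‖² = s ⟪[y, W], F W⟫ = s ⟪y, [W, F W]⟫ = 0`.
So `e^{s ad_{Fy}} V = 0`, whence `V = 0`; injectivity suffices in finite dimension.
-/

theorem NormedSpace.mul_exp_eq_self_of_mul_eq_zero {𝕂 𝔸 : Type*} [RCLike 𝕂] [NormedRing 𝔸]
    [NormedAlgebra 𝕂 𝔸] [CompleteSpace 𝔸] {a b : 𝔸} (h : b * a = 0) : b * exp a = b := by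
  have hterms : ∀ n ≠ 0, b * ((n.factorial : 𝕂)⁻¹ • a ^ n) = 0 := by
    intro n hn
    obtain ⟨m, rfl⟩ := Nat.exists_eq_succ_of_ne_zero hn
    rw [mul_smul_comm, pow_succ', ← mul_assoc, h, zero_mul, smul_zero]
  refine ((exp_series_hasSum_exp' (𝕂 := 𝕂) a).mul_left b).unique ?_
  simpa using hasSum_single 0 hterms

theorem NormedSpace.isUnit_exp_real {𝔸 : Type*} [NormedRing 𝔸] [NormedAlgebra ℝ 𝔸]
    [CompleteSpace 𝔸] (a : 𝔸) : IsUnit (exp a) :=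
  isUnit_exp_of_mem_ball (𝕂 := ℝ) <| (expSeries_radius_eq_top ℝ 𝔸).symm ▸ edist_lt_top _ _

section InnerProductSpace

variable {E : Type*} [NormedAddCommGroup E] [InnerProductSpace ℝ E]

theorem LinearMap.range_le_orthogonal_of_skew {D : E →ₗ[ℝ] E}
    (hskew : ∀ x z : E, ⟪D x, z⟫ + ⟪x, D z⟫ = 0) {t : Submodule ℝ E}
    (ht : t ≤ LinearMap.ker D) : LinearMap.range D ≤ tᗮ := by
  rintro _ ⟨x, rfl⟩
  rw [Submodule.mem_orthogonal']
  intro z hz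
  simpa [LinearMap.mem_ker.mp (ht hz)] using hskew x z

theorem eq_zero_of_eq_smul_apply_bracket (l : E →ₗ[ℝ] E →ₗ[ℝ] E) (hlalt : l.IsAlt)
    (hinv : ∀ X Y Z : E, ⟪l X Y, Z⟫ + ⟪Y, l X Z⟫ = 0) {t : Submodule ℝ E}
    (habelian : ∀ A ∈ t, ∀ B ∈ t, l A B = 0) {F : E →ₗ[ℝ] E}
    (hFsa : ∀ v w : E, ⟪F v, w⟫ = ⟪v, F w⟫) (hFim : ∀ v : E, F v ∈ t)
    {W : E} (hW : W ∈ t) (y : E) (s : ℝ) (h : W = s • F (l y W)) : W = 0 := by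
  refine (inner_self_eq_zero (𝕜 := ℝ)).mp ?_
  calc ⟪W, W⟫ = s * ⟪l y W, F W⟫ := by
        nth_rw 1 [h]
        rw [real_inner_smul_left, hFsa]
    _ = s * ⟪y, l W (F W)⟫ := by
        rw [← hlalt.neg W y, inner_neg_left, eq_neg_iff_add_eq_zero.mpr (hinv W y (F W))]
        ring
    _ = 0 := by rw [habelian W hW (F W) (hFim W), inner_zero_right, mul_zero]

end InnerProductSpace

theorem exp_sub_s_ad_y_F_bijective_general
    {g : Type*} [NormedAddCommGroup g] [InnerProductSpace ℝ g] [FiniteDimensional ℝ g]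
    (l : g →ₗ[ℝ] g →ₗ[ℝ] g)
    (hlalt : ∀ X : g, l X X = 0)
    (hinv : ∀ X Y Z : g, ⟪l X Y, Z⟫ + ⟪Y, l X Z⟫ = 0)
    (t : Submodule ℝ g)
    (habelian : ∀ A ∈ t, ∀ B ∈ t, l A B = 0)
    (F : g →ₗ[ℝ] g)
    (hFsa : ∀ v w : g, ⟪F v, w⟫ = ⟪v, F w⟫)
    (hFim : ∀ v : g, F v ∈ t)
    (hFperp : ∀ v ∈ tᗮ, F v = 0)
    (y : g) (s : ℝ) :
    Function.Bijective
      (fun V : g =>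
        NormedSpace.exp (s • LinearMap.toContinuousLinearMap (l (F y))) V
          - s • l y (F V)) := by
  set A := s • LinearMap.toContinuousLinearMap (l (F y))
  have hFA : LinearMap.toContinuousLinearMap F * A = 0 := by
    have hrange := LinearMap.range_le_orthogonal_of_skew (hinv (F y)) (habelian (F y) (hFim y))
    ext V
    simp [A, hFperp _ (hrange ⟨V, rfl⟩)]
  have hFexp (V : g) : F (NormedSpace.exp A V) = F V :=
    congr($(NormedSpace.mul_exp_eq_self_of_mul_eq_zero (𝕂 := ℝ) hFA) V)
  set T := (NormedSpace.exp A).toLinearMap - s • (l y ∘ₗ F)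
  suffices hT : Function.Injective T from ⟨hT, LinearMap.injective_iff_surjective.mp hT⟩
  rw [← LinearMap.ker_eq_bot, LinearMap.ker_eq_bot']
  intro V hV
  have hexpV : NormedSpace.exp A V = s • l y (F V) := sub_eq_zero.mp hV
  have hFV : F V = 0 := eq_zero_of_eq_smul_apply_bracket l hlalt hinv habelian hFsa hFim
    (hFim V) y s ((hFexp V).symm.trans (by rw [hexpV, map_smul]))
  refine (ContinuousLinearMap.isUnit_iff_bijective.mp (NormedSpace.isUnit_exp_real A)).injective ?_
  rw [hexpV, hFV, map_zero, smul_zero, map_zero]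

/-- With `𝔤`, `𝔱`, `F` as before, for every `y ∈ 𝔤` and `s ∈ ℝ`,
the linear map `e^{s ad_{Fy}} - s (ad_y ∘ F)` is a linear automorphism of `𝔤`,
i.e. it is bijective. -/
theorem exp_sub_s_ad_y_F_bijective
    {g : Type*} [NormedAddCommGroup g] [InnerProductSpace ℝ g] [FiniteDimensional ℝ g]
    (l : g →ₗ[ℝ] g →ₗ[ℝ] g)
    (hlalt : ∀ X : g, l X X = 0)
    (hljac : ∀ X Y Z : g, l X (l Y Z) = l (l X Y) Z + l Y (l X Z))
    (hinv : ∀ X Y Z : g, ⟪l X Y, Z⟫ + ⟪Y, l X Z⟫ = 0)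
    (t : Submodule ℝ g)
    (htsub : ∀ A ∈ t, ∀ B ∈ t, l A B ∈ t)
    (habelian : ∀ A ∈ t, ∀ B ∈ t, l A B = 0)
    (F : g →ₗ[ℝ] g)
    (hFsa : ∀ v w : g, ⟪F v, w⟫ = ⟪v, F w⟫)
    (hFim : ∀ v : g, F v ∈ t)
    (hFperp : ∀ v ∈ tᗮ, F v = 0)
    (y : g) (s : ℝ) :
    Function.Bijective
      (fun V : g =>
        NormedSpace.exp (s • LinearMap.toContinuousLinearMap (l (F y))) V
          - s • l y (F V)) :=
  exp_sub_s_ad_y_F_bijective_general l hlalt hinv t habelian F hFsa hFim hFperp y s
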